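/- arXiv:2405.16603 — 6 statements merged into one kernel-verified Lean document; each statement's English description precedes it below -/
import Mathlib

section
/- Let Δ ⊆ ℝ be the 'middle-two-thirds' Cantor set, i.e. Δ = { ∑_{n=1}^∞ a_n 6^{-n} : a_n ∈ {0,5} for all n }. If b, b' ∈ Δ and b ≠ b', then (b + b')/2 ∉ Δ. -/
/-- The "middle-two-thirds" Cantor set: real numbers of the form
`∑_{n=1}^∞ a_n 6^{-n}` with every digit `a_n ∈ {0, 5}`. -/
def CantorMiddleTwoThirds : Set ℝ :=
  {x | ∃ a : ℕ → ℝ, (∀ n, a n = 0 ∨ a n = 5) ∧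
    HasSum (fun n => a n / 6 ^ (n + 1)) x}

/-! Subtracting a digit expansion of the midpoint from the average of the expansions of `b` and
`b'` expands `0` in base 6 with digits in `{0, ±5/2, ±5}`. The first nonzero digit would
contribute at least `(5/2)·6^{-k}`, while all later terms together are at most `6^{-k}`, so every
digit vanishes: each `(a_n + a'_n)/2` is a digit `0` or `5`, which forces `a_n = a'_n`. -/

section DigitExpansion

variable {r m M x : ℝ} {d : ℕ → ℝ}

lemma hasSum_digits_tail (hr : r ≠ 0) (hsum : HasSum (fun n => d n / r ^ (n + 1)) x) :
    HasSum (fun n => d (n + 1) / r ^ (n + 1)) (r * x - d 0) := by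
  have htail := ((hasSum_nat_add_iff' 1).mpr hsum).mul_left r
  rw [Finset.sum_range_one, zero_add, pow_one, mul_sub, mul_div_cancel₀ _ hr] at htail
  exact htail.congr_fun fun n => by rw [pow_succ _ (n + 1), ← div_div, mul_div_cancel₀ _ hr]

lemma abs_le_of_hasSum_digits (hr : 1 < r) (hM : ∀ n, |d n| ≤ M)
    (hsum : HasSum (fun n => d n / r ^ (n + 1)) x) : |x| ≤ M / (r - 1) := by
  have hr0 : 0 < r := one_pos.trans hr
  have hgeom : HasSum (fun n => M / r * r⁻¹ ^ n) (M / r * (1 - r⁻¹)⁻¹) :=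
    (hasSum_geometric_of_lt_one (inv_nonneg.mpr hr0.le) (inv_lt_one_of_one_lt₀ hr)).mul_left _
  have hval : M / r * (1 - r⁻¹)⁻¹ = M / (r - 1) := by
    field_simp
  refine hval ▸ hsum.norm_le_of_bounded hgeom fun n => ?_
  rw [inv_pow, ← div_eq_mul_inv, div_div, ← pow_succ', Real.norm_eq_abs, abs_div,
    abs_of_pos (pow_pos hr0 _)]
  exact div_le_div_of_nonneg_right (hM n) (pow_pos hr0 _).le

lemma digit_zero_eq_zero_of_hasSum_eq_zero (hr : 1 < r) (hmM : M / (r - 1) < m)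
    (hgap : ∀ n, d n = 0 ∨ m ≤ |d n|) (hM : ∀ n, |d n| ≤ M)
    (hsum : HasSum (fun n => d n / r ^ (n + 1)) 0) : d 0 = 0 := by
  refine (hgap 0).resolve_right fun hm => ?_
  have := abs_le_of_hasSum_digits hr (fun n => hM (n + 1))
    (hasSum_digits_tail (one_pos.trans hr).ne' hsum)
  rw [mul_zero, zero_sub, abs_neg] at this
  linarith

lemma eq_zero_of_hasSum_digits_eq_zero (hr : 1 < r) (hmM : M / (r - 1) < m)
    (hgap : ∀ n, d n = 0 ∨ m ≤ |d n|) (hM : ∀ n, |d n| ≤ M)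
    (hsum : HasSum (fun n => d n / r ^ (n + 1)) 0) (n : ℕ) : d n = 0 := by
  induction n generalizing d with
  | zero => exact digit_zero_eq_zero_of_hasSum_eq_zero hr hmM hgap hM hsum
  | succ n ih =>
    have htail := hasSum_digits_tail (one_pos.trans hr).ne' hsum
    rw [mul_zero, digit_zero_eq_zero_of_hasSum_eq_zero hr hmM hgap hM hsum, sub_zero] at htail
    exact ih (fun k => hgap (k + 1)) (fun k => hM (k + 1)) htail

end DigitExpansion

section MidpointDigits

variable {x y z : ℝ}

lemma midpoint_sub_eq_zero_or_le_abs (hx : x = 0 ∨ x = 5) (hy : y = 0 ∨ y = 5)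
    (hz : z = 0 ∨ z = 5) : (x + y) / 2 - z = 0 ∨ 5 / 2 ≤ |(x + y) / 2 - z| := by
  rcases hx with rfl | rfl <;> rcases hy with rfl | rfl <;> rcases hz with rfl | rfl <;>
    norm_num [abs_of_nonneg, abs_of_nonpos]

lemma abs_midpoint_sub_le (hx : x = 0 ∨ x = 5) (hy : y = 0 ∨ y = 5)
    (hz : z = 0 ∨ z = 5) : |(x + y) / 2 - z| ≤ 5 := by
  rcases hx with rfl | rfl <;> rcases hy with rfl | rfl <;> rcases hz with rfl | rfl <;>
    norm_num [abs_of_nonneg, abs_of_nonpos]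

lemma eq_of_midpoint_eq (hx : x = 0 ∨ x = 5) (hy : y = 0 ∨ y = 5) (hz : z = 0 ∨ z = 5)
    (h : (x + y) / 2 = z) : x = y := by
  rcases hx with rfl | rfl <;> rcases hy with rfl | rfl <;> rcases hz with rfl | rfl <;>
    first | rfl | norm_num at h

end MidpointDigits

theorem midpoint_not_mem_cantorMiddleTwoThirds
    {b b' : ℝ} (hb : b ∈ CantorMiddleTwoThirds) (hb' : b' ∈ CantorMiddleTwoThirds)
    (hne : b ≠ b') : (b + b') / 2 ∉ CantorMiddleTwoThirds := by
  obtain ⟨a, ha, hsa⟩ := hb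
  obtain ⟨a', ha', hsa'⟩ := hb'
  rintro ⟨c, hc, hsc⟩
  have hsum : HasSum (fun n => ((a n + a' n) / 2 - c n) / 6 ^ (n + 1)) 0 := by
    have h := ((hsa.add hsa').div_const 2).sub hsc
    rw [sub_self] at h
    exact h.congr_fun fun n => by ring
  have hdigits (n : ℕ) : (a n + a' n) / 2 - c n = 0 :=
    eq_zero_of_hasSum_digits_eq_zero (by norm_num) (by norm_num : (5 : ℝ) / (6 - 1) < 5 / 2)
      (fun n => midpoint_sub_eq_zero_or_le_abs (ha n) (ha' n) (hc n))
      (fun n => abs_midpoint_sub_le (ha n) (ha' n) (hc n)) hsum n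
  refine hne (hsa.unique ?_)
  convert hsa' using 2 with n
  rw [eq_of_midpoint_eq (ha n) (ha' n) (hc n) (sub_eq_zero.mp (hdigits n))]
end

section
/- Let Δ ⊆ ℝ be a set with the property that the midpoint of any two distinct points of Δ does not belong to Δ. Let L ⊆ Δ be a nonempty compact subset and let b ∈ Δ. Then there exists a unique a ∈ L such that |b − a| = dist(b, L), i.e. the nearest-point projection of b onto L is unique. -/
theorem eq_midpoint_of_abs_sub_eq_abs_sub {a a' b : ℝ} (hne : a ≠ a') (h : |b - a| = |b - a'|) :
    b = (a + a') / 2 := by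
  rcases abs_eq_abs.mp h with h | h
  · exact absurd (by linarith : a = a') hne
  · linarith

/-- If `Δ ⊆ ℝ` contains no midpoint of two of its distinct points, `L ⊆ Δ` is a
nonempty compact set and `b ∈ Δ`, then the nearest point of `L` to `b` is unique. -/
theorem unique_nearest_point_of_midpoint_free
    (Δ : Set ℝ) (hΔ : ∀ b ∈ Δ, ∀ b' ∈ Δ, b ≠ b' → (b + b') / 2 ∉ Δ)
    (L : Set ℝ) (hLΔ : L ⊆ Δ) (hLne : L.Nonempty) (hLc : IsCompact L)
    (b : ℝ) (hb : b ∈ Δ) :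
    ∃! a : ℝ, a ∈ L ∧ |b - a| = Metric.infDist b L := by
  obtain ⟨a, haL, ha⟩ := hLc.exists_infDist_eq_dist hLne b
  refine ⟨a, ⟨haL, by rw [ha, Real.dist_eq]⟩, ?_⟩
  rintro a' ⟨ha'L, ha'⟩
  by_contra hne
  have hmid : b = (a' + a) / 2 :=
    eq_midpoint_of_abs_sub_eq_abs_sub hne (by rw [ha', ha, Real.dist_eq])
  exact hΔ a' (hLΔ ha'L) a (hLΔ haL) hne (hmid ▸ hb)
end

section
/- With the notation of the previous statement, define ζ : P → ℝ^ℕ × ℝ^ℕ by ζ(a) = (θ(a), (F_n(θ(a))^{-1})_{n∈ℕ}). Then ζ(P) is a closed subset of ℝ^ℕ × ℝ^ℕ and ζ is a homeomorphism from P onto ζ(P). In particular, every Polish space is homeomorphic to a closed subset of ℝ^ℕ. -/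
open Finset

/-!
The coordinates `dist p (a k)` determine `p` and its topology, since `a` is dense; so `ζ` is an
embedding. For closedness, let `ζ (p i) → (z, w)`. If every `F n z` is positive, there are
`r n ≥ n` such that `z` agrees with `θ (a (r n))` up to `1 / n` on the coordinates `≤ r n`;
then `a (r n)` is Cauchy and its limit `q` has `θ q = z`. If `F n z = 0`, the bounded
reciprocals `(F n (θ (p i)))⁻¹` force `F n (θ (p i)) = 0` for infinitely many `i`, which pins
`p i` to the finite set `a '' Iio n`, so again `z` lies in the range of `θ`. In both cases `p i`
converges, and `(z, w) = ζ (lim p i)`.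
-/

open Filter Topology

lemma frequently_eq_zero_of_tendsto_inv {K ι : Type*} [DivisionRing K] [TopologicalSpace K]
    [ContinuousMul K] [T2Space K] {l : Filter ι} [l.NeBot] {x : ι → K} {w : K}
    (hx : Tendsto x l (𝓝 0)) (hinv : Tendsto (fun i => (x i)⁻¹) l (𝓝 w)) :
    ∃ᶠ i in l, x i = 0 := by
  by_contra h
  rw [not_frequently] at h
  have h1 : Tendsto (fun i => x i * (x i)⁻¹) l (𝓝 1) :=
    tendsto_const_nhds.congr' (h.mono fun i hi => (mul_inv_cancel₀ hi).symm)
  have h0 := hx.mul hinv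
  rw [zero_mul] at h0
  exact one_ne_zero (tendsto_nhds_unique h1 h0)

section DistEmbedding

variable {P : Type*} [MetricSpace P] (a : ℕ → P)

/-- The map `θ`. -/
def distSeq (p : P) : ℕ → ℝ := fun k => dist p (a k)

lemma continuous_distSeq : Continuous (distSeq a) :=
  continuous_pi fun _ => continuous_id.dist continuous_const

lemma dist_le_two_mul_dist_add_abs (p q : P) (m : ℕ) :
    dist q p ≤ 2 * dist p (a m) + |dist q (a m) - dist p (a m)| := by
  have htri := dist_triangle q (a m) p
  rw [dist_comm (a m) p] at htri
  linarith [le_abs_self (dist q (a m) - dist p (a m))]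

lemma isEmbedding_distSeq (ha : DenseRange a) : IsEmbedding (distSeq a) := by
  refine (isInducing_iff_nhds.2 fun p => le_antisymm
    (continuous_distSeq a).continuousAt.le_comap ?_).isEmbedding
  refine Metric.nhds_basis_ball.ge_iff.2 fun ε hε => ?_
  obtain ⟨m, hm⟩ := Metric.denseRange_iff.1 ha p (ε / 3) (by positivity)
  refine mem_comap.2 ⟨(fun z : ℕ → ℝ => z m) ⁻¹' Metric.ball (dist p (a m)) (ε / 3),
    ((continuous_apply m).tendsto _) (Metric.ball_mem_nhds _ (by positivity)), fun q hq => ?_⟩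
  replace hq : |dist q (a m) - dist p (a m)| < ε / 3 := hq
  rw [Metric.mem_ball]
  linarith [dist_le_two_mul_dist_add_abs a p q m]

/-- The inner maximum in the paper's `F n`. -/
noncomputable def deviation (z : ℕ → ℝ) (r : ℕ) : ℝ :=
  (range (r + 1)).sup' (nonempty_range_iff.mpr (Nat.succ_ne_zero _))
    (fun k => |z k - dist (a r) (a k)|)

lemma abs_sub_dist_le_deviation (z : ℕ → ℝ) {k r : ℕ} (h : k ≤ r) :
    |z k - dist (a r) (a k)| ≤ deviation a z r :=
  le_sup' (fun k => |z k - dist (a r) (a k)|) (mem_range.mpr (Nat.lt_succ_of_le h))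

lemma deviation_nonneg (z : ℕ → ℝ) (r : ℕ) : 0 ≤ deviation a z r :=
  (abs_nonneg _).trans (abs_sub_dist_le_deviation a z r.zero_le)

lemma deviation_distSeq_le (p : P) (r : ℕ) : deviation a (distSeq a p) r ≤ dist p (a r) :=
  sup'_le _ _ fun k _ => abs_dist_sub_le p (a r) (a k)

lemma dist_le_deviation_add (z : ℕ → ℝ) {r s : ℕ} (h : r ≤ s) :
    dist (a r) (a s) ≤ deviation a z r + deviation a z s := by
  have hs := abs_le.1 (abs_sub_dist_le_deviation a z h)
  have hr := abs_le.1 (abs_sub_dist_le_deviation a z (le_refl r))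
  rw [dist_self, sub_zero] at hr
  rw [dist_comm]
  linarith [hs.1, hr.2]

lemma continuous_deviation (r : ℕ) : Continuous fun z => deviation a z r :=
  Continuous.finset_sup'_apply _ fun k _ => ((continuous_apply k).sub continuous_const).abs

theorem mem_range_distSeq_of_deviation_lt [CompleteSpace P] {z : ℕ → ℝ} {r : ℕ → ℕ}
    (hr : ∀ n, n ≤ r n) (hdev : ∀ n, deviation a z (r n) < 1 / (n + 1)) :
    z ∈ Set.range (distSeq a) := by
  have hε : Tendsto (fun n : ℕ => 1 / ((n : ℝ) + 1)) atTop (𝓝 0) :=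
    tendsto_one_div_add_atTop_nhds_zero_nat
  have hcauchy : CauchySeq fun n => a (r n) := by
    refine cauchySeq_of_le_tendsto_0 (fun N : ℕ => 2 * (1 / ((N : ℝ) + 1)))
      (fun m n N hm hn => ?_) (by simpa using hε.const_mul 2)
    have hmn : dist (a (r m)) (a (r n)) ≤ deviation a z (r m) + deviation a z (r n) := by
      rcases le_total (r m) (r n) with h | h
      · exact dist_le_deviation_add a z h
      · rw [dist_comm, add_comm]
        exact dist_le_deviation_add a z h
    have hNm : 1 / ((m : ℝ) + 1) ≤ 1 / ((N : ℝ) + 1) := by gcongr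
    have hNn : 1 / ((n : ℝ) + 1) ≤ 1 / ((N : ℝ) + 1) := by gcongr
    linarith [hdev m, hdev n]
  obtain ⟨q, hq⟩ := cauchySeq_tendsto_of_complete hcauchy
  refine ⟨q, funext fun k => tendsto_nhds_unique
    (((continuous_id.dist continuous_const).tendsto q).comp hq) ?_⟩
  refine tendsto_iff_dist_tendsto_zero.2 (squeeze_zero' (.of_forall fun _ => dist_nonneg) ?_ hε)
  filter_upwards [eventually_ge_atTop k] with n hn
  rw [Real.dist_eq, abs_sub_comm]
  exact (abs_sub_dist_le_deviation a z (hn.trans (hr n))).trans (hdev n).le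

lemma ball_subset_image_Iio_of_le_dist (ha : DenseRange a) {p : P} {n : ℕ} {ε : ℝ}
    (h : ∀ r, n ≤ r → ε ≤ dist p (a r)) : Metric.ball p ε ⊆ a '' Set.Iio n := by
  have hsub : Metric.ball p ε ∩ Set.range a ⊆ a '' Set.Iio n := by
    rintro _ ⟨hm, m, rfl⟩
    refine ⟨m, Set.mem_Iio.2 (not_le.1 fun hnm => ?_), rfl⟩
    rw [Metric.mem_ball, dist_comm] at hm
    linarith [h m hnm]
  calc Metric.ball p ε ⊆ closure (Metric.ball p ε ∩ Set.range a) :=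
        ha.open_subset_closure_inter Metric.isOpen_ball
    _ ⊆ closure (a '' Set.Iio n) := closure_mono hsub
    _ = a '' Set.Iio n := ((Set.finite_Iio n).image a).isClosed.closure_eq

/-- The paper's `F n`, with the sum over `r ≥ n` reindexed by `r = n + j`. -/
noncomputable def proximity (n : ℕ) (z : ℕ → ℝ) : ℝ :=
  ∑' j : ℕ, (2 : ℝ)⁻¹ ^ (n + j) * max 0 (1 - (n : ℝ) * deviation a z (n + j))

lemma norm_proximity_term_le (n : ℕ) (z : ℕ → ℝ) (j : ℕ) :
    ‖(2 : ℝ)⁻¹ ^ (n + j) * max 0 (1 - (n : ℝ) * deviation a z (n + j))‖ ≤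
      (2 : ℝ)⁻¹ ^ (n + j) := by
  have := mul_nonneg n.cast_nonneg (deviation_nonneg a z (n + j))
  rw [Real.norm_eq_abs, abs_of_nonneg (by positivity)]
  exact mul_le_of_le_one_right (by positivity) (max_le zero_le_one (by linarith))

lemma summable_two_inv_pow_add (n : ℕ) : Summable fun j : ℕ => (2 : ℝ)⁻¹ ^ (n + j) := by
  simpa [pow_add] using summable_geometric_two.mul_left ((2 : ℝ)⁻¹ ^ n)

lemma continuous_proximity (n : ℕ) : Continuous (proximity a n) :=
  continuous_tsum (fun j => continuous_const.mul (continuous_const.max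
      (continuous_const.sub (continuous_const.mul (continuous_deviation a (n + j))))))
    (summable_two_inv_pow_add n) fun j z => norm_proximity_term_le a n z j

lemma proximity_nonneg (n : ℕ) (z : ℕ → ℝ) : 0 ≤ proximity a n z :=
  tsum_nonneg fun _ => by positivity

lemma proximity_pos_iff {n : ℕ} {z : ℕ → ℝ} :
    0 < proximity a n z ↔ ∃ j, (n : ℝ) * deviation a z (n + j) < 1 := by
  constructor
  · intro hpos
    by_contra! h
    have hterm :
        ∀ j, (2 : ℝ)⁻¹ ^ (n + j) * max 0 (1 - (n : ℝ) * deviation a z (n + j)) = 0 :=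
      fun j => by rw [max_eq_left (by linarith [h j]), mul_zero]
    simp only [proximity, hterm, tsum_zero, lt_self_iff_false] at hpos
  · rintro ⟨j, hj⟩
    have hsum :=
      Summable.of_norm_bounded (summable_two_inv_pow_add n) (norm_proximity_term_le a n z)
    exact hsum.tsum_pos (fun _ => by positivity) j
      (mul_pos (by positivity) (lt_max_of_lt_right (by linarith)))

lemma exists_ball_subset_of_proximity_eq_zero (ha : DenseRange a) {p : P} {n : ℕ}
    (h : proximity a n (distSeq a p) = 0) : ∃ ε > 0, Metric.ball p ε ⊆ a '' Set.Iio n := by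
  have hdev : ∀ j, 1 ≤ (n : ℝ) * deviation a (distSeq a p) (n + j) := by
    simpa [h] using (proximity_pos_iff a (n := n) (z := distSeq a p)).not
  have hn : (0 : ℝ) < n := by
    have := hdev 0
    rcases n.eq_zero_or_pos with rfl | hn
    · norm_num at this
    · exact_mod_cast hn
  refine ⟨1 / n, by positivity, ball_subset_image_Iio_of_le_dist a ha fun r hr => ?_⟩
  obtain ⟨j, rfl⟩ := Nat.exists_eq_add_of_le hr
  rw [div_le_iff₀ hn]
  nlinarith [hdev j, deviation_distSeq_le a p (n + j)]

/-- The map `ζ`. -/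
noncomputable def distProximityMap (p : P) : (ℕ → ℝ) × (ℕ → ℝ) :=
  (distSeq a p, fun n => (proximity a n (distSeq a p))⁻¹)

lemma continuous_distProximityMap (ha : DenseRange a) : Continuous (distProximityMap a) := by
  refine (continuous_distSeq a).prodMk (continuous_pi fun n => continuous_iff_continuousAt.2
    fun p => ?_)
  by_cases h : proximity a n (distSeq a p) = 0
  · obtain ⟨ε, hε, hball⟩ := exists_ball_subset_of_proximity_eq_zero a ha h
    have hp : IsOpen {p} := isOpen_singleton_of_finite_mem_nhds p (Metric.ball_mem_nhds p hε)
      (((Set.finite_Iio n).image a).subset hball)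
    rw [ContinuousAt, (isOpen_singleton_iff_nhds_eq_pure p).1 hp]
    exact tendsto_pure_nhds _ _
  · exact ((continuous_proximity a n).comp (continuous_distSeq a)).continuousAt.inv₀ h

lemma isEmbedding_distProximityMap (ha : DenseRange a) :
    IsEmbedding (distProximityMap a) :=
  .of_comp (continuous_distProximityMap a ha) continuous_fst (isEmbedding_distSeq a ha)

theorem mem_range_distSeq_of_tendsto [CompleteSpace P] (ha : DenseRange a) {p : ℕ → P}
    {z w : ℕ → ℝ} (hz : Tendsto (fun i => distSeq a (p i)) atTop (𝓝 z))
    (hw : ∀ n, Tendsto (fun i => (proximity a n (distSeq a (p i)))⁻¹) atTop (𝓝 (w n))) :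
    z ∈ Set.range (distSeq a) := by
  by_cases hpos : ∀ n, 0 < proximity a n z
  · choose j hj using fun n => (proximity_pos_iff a).1 (hpos (n + 1))
    refine mem_range_distSeq_of_deviation_lt a (r := fun n => n + 1 + j n) (fun n => by omega)
      fun n => ?_
    rw [lt_div_iff₀ (by positivity), mul_comm]
    exact_mod_cast hj n
  · obtain ⟨n, hn⟩ := not_forall.1 hpos
    have h0 : proximity a n z = 0 := le_antisymm (not_lt.1 hn) (proximity_nonneg a n z)
    have hfreq := frequently_eq_zero_of_tendsto_inv
      (h0 ▸ ((continuous_proximity a n).tendsto z).comp hz) (hw n)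
    have hfin := ((Set.finite_Iio n).image a).image (distSeq a)
    have hmem : ∃ᶠ i in atTop, distSeq a (p i) ∈ distSeq a '' (a '' Set.Iio n) :=
      hfreq.mono fun i hi => Set.mem_image_of_mem _ <|
        let ⟨_, hε, hball⟩ := exists_ball_subset_of_proximity_eq_zero a ha hi
        hball (Metric.mem_ball_self hε)
    have hz' := mem_closure_of_frequently_of_tendsto hmem hz
    rw [hfin.isClosed.closure_eq] at hz'
    exact Set.image_subset_range _ _ hz'

theorem isClosed_range_distProximityMap [CompleteSpace P] (ha : DenseRange a) :
    IsClosed (Set.range (distProximityMap a)) := by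
  refine IsSeqClosed.isClosed fun x L hx hL => ?_
  choose p hp using hx
  obtain rfl : (fun i => distProximityMap a (p i)) = x := funext hp
  have hz := (continuous_fst.tendsto L).comp hL
  have hw n := ((continuous_apply n).tendsto _).comp ((continuous_snd.tendsto L).comp hL)
  obtain ⟨q, hq⟩ := mem_range_distSeq_of_tendsto a ha hz hw
  have hpq : Tendsto p atTop (𝓝 q) :=
    (isEmbedding_distSeq a ha).tendsto_nhds_iff.2 (hq ▸ hz)
  exact ⟨q, tendsto_nhds_unique (((continuous_distProximityMap a ha).tendsto q).comp hpq) hL⟩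

end DistEmbedding

theorem closedEmbedding_dist_embedding_general
    {P : Type*} [MetricSpace P] [CompleteSpace P]
    (a : ℕ → P) (ha : DenseRange a)
    (θ : P → ℕ → ℝ) (hθ : ∀ p n, θ p n = dist p (a n))
    (κ : ℕ → ℝ → ℝ) (hκ : ∀ n t, κ n t = max 0 (1 - (n : ℝ) * t))
    (F : ℕ → (ℕ → ℝ) → ℝ)
    (hF : ∀ n z, F n z = ∑' j : ℕ, (2 : ℝ)⁻¹ ^ (n + j) *
      κ n ((Finset.range (n + j + 1)).sup'
        (Finset.nonempty_range_iff.mpr (Nat.succ_ne_zero _))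
        (fun k => |z k - dist (a (n + j)) (a k)|)))
    (ζ : P → (ℕ → ℝ) × (ℕ → ℝ))
    (hζ : ∀ p, ζ p = (θ p, fun n => (F n (θ p))⁻¹)) :
    IsClosed (Set.range ζ) ∧ Topology.IsEmbedding ζ := by
  obtain rfl : θ = distSeq a := funext fun p => funext (hθ p)
  obtain rfl : κ = fun (n : ℕ) t => max 0 (1 - (n : ℝ) * t) := funext fun n => funext (hκ n)
  obtain rfl : F = proximity a := funext fun n => funext (hF n)
  obtain rfl : ζ = distProximityMap a := funext hζ
  exact ⟨isClosed_range_distProximityMap a ha, isEmbedding_distProximityMap a ha⟩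

/-- The map `ζ a = (θ a, (F n (θ a))⁻¹)` is a homeomorphism of the Polish space
`P` onto the closed subset `ζ(P)` of `ℝ^ℕ × ℝ^ℕ`. -/
theorem closedEmbedding_dist_embedding
    {P : Type*} [MetricSpace P] [CompleteSpace P]
    (a : ℕ → P) (ha : DenseRange a) (hd : ∀ x y : P, dist x y ≤ 1)
    (θ : P → ℕ → ℝ) (hθ : ∀ p n, θ p n = dist p (a n))
    (κ : ℕ → ℝ → ℝ) (hκ : ∀ n t, κ n t = max 0 (1 - (n : ℝ) * t))
    (F : ℕ → (ℕ → ℝ) → ℝ)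
    (hF : ∀ n z, F n z = ∑' j : ℕ, (2 : ℝ)⁻¹ ^ (n + j) *
      κ n ((Finset.range (n + j + 1)).sup'
        (Finset.nonempty_range_iff.mpr (Nat.succ_ne_zero _))
        (fun k => |z k - dist (a (n + j)) (a k)|)))
    (ζ : P → (ℕ → ℝ) × (ℕ → ℝ))
    (hζ : ∀ p, ζ p = (θ p, fun n => (F n (θ p))⁻¹)) :
    IsClosed (Set.range ζ) ∧ Topology.IsEmbedding ζ :=
  closedEmbedding_dist_embedding_general a ha θ hθ κ hκ F hF ζ hζ
end

section
/- Let (Ω, 𝓕) be a measurable space and μ a finite signed measure on Ω with Jordan decomposition μ = μ⁺ − μ⁻. Then the distance, in total variation norm, from μ to the cone of finite (nonnegative) measures on Ω equals ‖μ⁻‖ = μ⁻(Ω). Moreover, μ⁻(Ω) = sup { −∫ f dμ : f measurable, 0 ≤ f ≤ 1 }. -/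
/-!
The choice `λ = μ⁺` gives `μ - λ = -μ⁻`, so the distance is at most `μ⁻(Ω)`. Conversely, take a
Hahn set `S` with `μ⁺(S) = 0` and `μ⁻(S) = μ⁻(Ω)`: then `(μ - λ)(S) = -μ⁻(Ω) - λ(S) ≤ -μ⁻(Ω)`, and
the total variation of `μ - λ` dominates `|(μ - λ)(S)|`. For the dual formula, `0 ≤ f ≤ 1` gives
`∫ f dμ⁻ - ∫ f dμ⁺ ≤ μ⁻(Ω)`, with equality for `f = 𝟙_S`.
-/

open MeasureTheory

/-- The total variation norm of a finite signed measure. -/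
noncomputable def tvNorm {Ω : Type*} [MeasurableSpace Ω] (ν : SignedMeasure Ω) : ℝ :=
  (ν.totalVariation Set.univ).toReal

open Set

namespace MeasureTheory

variable {Ω : Type*} [MeasurableSpace Ω]

theorem Measure.totalVariation_toSignedMeasure (m : Measure Ω) [IsFiniteMeasure m] :
    m.toSignedMeasure.totalVariation = m := by
  have hjordan : m.toSignedMeasure.toJordanDecomposition =
      ⟨m, 0, Measure.MutuallySingular.zero_right⟩ :=
    SignedMeasure.toJordanDecomposition_eq (by simp [JordanDecomposition.toSignedMeasure])
  simp [SignedMeasure.totalVariation, hjordan]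

theorem JordanDecomposition.exists_measurableSet_posPart_eq_zero_negPart_eq_univ
    (j : JordanDecomposition Ω) :
    ∃ S, MeasurableSet S ∧ j.posPart.real S = 0 ∧ j.negPart.real S = j.negPart.real univ := by
  obtain ⟨S, hS, hpos, hneg⟩ := j.mutuallySingular
  refine ⟨S, hS, by simp [measureReal_def, hpos], ?_⟩
  rw [← measureReal_add_measureReal_compl (μ := j.negPart) hS,
    measureReal_def j.negPart Sᶜ, hneg, ENNReal.toReal_zero, add_zero]

theorem integral_le_measureReal_univ {m : Measure Ω} [IsFiniteMeasure m] {f : Ω → ℝ}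
    (hf₀ : 0 ≤ f) (hf₁ : f ≤ 1) : ∫ x, f x ∂m ≤ m.real univ := by
  simpa using
    integral_mono_of_nonneg (ae_of_all _ hf₀) (integrable_const (1 : ℝ)) (ae_of_all _ hf₁)

namespace SignedMeasure

theorem neg_apply_le_tvNorm (ν : SignedMeasure Ω) (s : Set Ω) : -ν s ≤ tvNorm ν :=
  calc -ν s ≤ ‖ν s‖ := neg_le_abs _
    _ ≤ ν.totalVariation.real s := norm_le_totalVariation ν s
    _ ≤ ν.totalVariation.real univ := measureReal_mono (subset_univ s)

theorem sub_toSignedMeasure_posPart (μ : SignedMeasure Ω) :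
    μ - μ.toJordanDecomposition.posPart.toSignedMeasure =
      -μ.toJordanDecomposition.negPart.toSignedMeasure := by
  set j := μ.toJordanDecomposition
  have hμ : μ = j.toSignedMeasure := μ.toSignedMeasure_toJordanDecomposition.symm
  rw [hμ, JordanDecomposition.toSignedMeasure]
  abel

theorem tvNorm_sub_toSignedMeasure_posPart (μ : SignedMeasure Ω) :
    tvNorm (μ - μ.toJordanDecomposition.posPart.toSignedMeasure) =
      μ.toJordanDecomposition.negPart.real univ := by
  rw [tvNorm, sub_toSignedMeasure_posPart, totalVariation_neg,
    Measure.totalVariation_toSignedMeasure, measureReal_def]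

theorem negPart_real_univ_le_tvNorm_sub (μ : SignedMeasure Ω) (lam : Measure Ω)
    [IsFiniteMeasure lam] :
    μ.toJordanDecomposition.negPart.real univ ≤ tvNorm (μ - lam.toSignedMeasure) := by
  obtain ⟨S, hS, hpos, hneg⟩ :=
    μ.toJordanDecomposition.exists_measurableSet_posPart_eq_zero_negPart_eq_univ
  have hμS : (μ - lam.toSignedMeasure) S =
      -μ.toJordanDecomposition.negPart.real univ - lam.real S := by
    rw [sub_apply, Measure.toSignedMeasure_apply_measurable hS,
      μ.apply_eq_posPart_real_sub_negPart_real hS, hpos, hneg, zero_sub]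
  have hbound := (μ - lam.toSignedMeasure).neg_apply_le_tvNorm S
  linarith [measureReal_nonneg (μ := lam) (s := S)]

theorem isLeast_tvNorm_sub_finiteMeasure (μ : SignedMeasure Ω) :
    IsLeast {t : ℝ | ∃ (lam : Measure Ω) (hl : IsFiniteMeasure lam),
        t = tvNorm (μ - @Measure.toSignedMeasure Ω _ lam hl)}
      (μ.toJordanDecomposition.negPart.real univ) := by
  refine ⟨⟨_, inferInstance, μ.tvNorm_sub_toSignedMeasure_posPart.symm⟩, ?_⟩
  rintro t ⟨lam, hl, rfl⟩
  exact μ.negPart_real_univ_le_tvNorm_sub lam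

theorem isGreatest_integral_negPart_sub_integral_posPart (μ : SignedMeasure Ω) :
    IsGreatest {r : ℝ | ∃ f : Ω → ℝ, Measurable f ∧ (∀ x, 0 ≤ f x ∧ f x ≤ 1) ∧
        r = (∫ x, f x ∂μ.toJordanDecomposition.negPart)
            - ∫ x, f x ∂μ.toJordanDecomposition.posPart}
      (μ.toJordanDecomposition.negPart.real univ) := by
  obtain ⟨S, hS, hpos, hneg⟩ :=
    μ.toJordanDecomposition.exists_measurableSet_posPart_eq_zero_negPart_eq_univ
  refine ⟨⟨S.indicator 1, measurable_one.indicator hS, fun x => ?_, ?_⟩, ?_⟩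
  · by_cases hx : x ∈ S <;> simp [hx]
  · rw [integral_indicator_one hS, integral_indicator_one hS, hpos, hneg, sub_zero]
  · rintro r ⟨f, -, hf, rfl⟩
    have hle := integral_le_measureReal_univ (m := μ.toJordanDecomposition.negPart)
      (fun x => (hf x).1) (fun x => (hf x).2)
    have hnonneg : 0 ≤ ∫ x, f x ∂μ.toJordanDecomposition.posPart :=
      integral_nonneg fun x => (hf x).1
    linarith

end SignedMeasure

end MeasureTheory

/-- The total-variation distance from a finite signed measure `μ` to the cone of
finite nonnegative measures equals `‖μ⁻‖ = μ⁻(Ω)`, which in turn equals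
`sup { −∫ f dμ : f measurable, 0 ≤ f ≤ 1 }`. -/
theorem dist_to_cone_of_measures_eq_negPart
    {Ω : Type*} [MeasurableSpace Ω] (μ : SignedMeasure Ω) :
    sInf {t : ℝ | ∃ (lam : Measure Ω) (hl : IsFiniteMeasure lam),
        t = tvNorm (μ - @Measure.toSignedMeasure Ω _ lam hl)} =
      (μ.toJordanDecomposition.negPart Set.univ).toReal ∧
    (μ.toJordanDecomposition.negPart Set.univ).toReal =
      sSup {r : ℝ | ∃ f : Ω → ℝ, Measurable f ∧ (∀ x, 0 ≤ f x ∧ f x ≤ 1) ∧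
        r = (∫ x, f x ∂μ.toJordanDecomposition.negPart)
            - ∫ x, f x ∂μ.toJordanDecomposition.posPart} :=
  ⟨μ.isLeast_tvNorm_sub_finiteMeasure.csInf_eq,
    μ.isGreatest_integral_negPart_sub_integral_posPart.csSup_eq.symm⟩
end

section
/- Let K and L be nonempty compact Hausdorff connected spaces and let α : C(K,ℂ) ⊕ C(L,ℂ) → C(K,ℂ) ⊕ C(L,ℂ) be a surjective linear isometry, where the direct sum carries the supremum norm ‖(f,g)‖ = max(‖f‖_∞, ‖g‖_∞). Then either α(C(K,ℂ) ⊕ {0}) = C(K,ℂ) ⊕ {0}, or α(C(K,ℂ) ⊕ {0}) = {0} ⊕ C(L,ℂ) (the latter can only occur when K and L are homeomorphic). -/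
/-!
Conjugating the coordinate projection `(f, g) ↦ (f, 0)` by `α` gives an M-projection `R`
(`‖q‖ = max ‖R q‖ ‖q - R q‖`) whose fixed points form `α (C(K,ℂ) ⊕ 0)`. Through
`C(K,ℂ) × C(L,ℂ) ≅ C(K ⊔ L, ℂ)` it suffices to know that every M-projection `P` of `C(X,ℂ)` is
multiplication by the idempotent `e = P 1`. Rotating the kernel part by a unimodular scalar gives
`|u x| + |v x| ≤ max ‖u‖ ‖v‖` for `u` in the range and `v` in the kernel; hence, by equality in the
triangle inequality of the strictly convex plane, `(P z) x = e x * z x` whenever `|z|` attains its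
maximum at `x`. By Urysohn's lemma a function vanishing at `x` is uniformly close to a difference
of two such functions agreeing at `x`, and linearity does the rest. As `K` and `L` are connected,
`e` is `0`, `1` or the indicator of `K` or of `L`, and the first two cases would make the
coordinate projection `0` or the identity.
-/

theorem eq_smul_of_norm_le_mul_of_norm_sub_le_mul {E : Type*} [NormedAddCommGroup E]
    [NormedSpace ℝ E] [StrictConvexSpace ℝ E] {a s : E} {t : ℝ}
    (ha : ‖a‖ ≤ t * ‖s‖) (hsa : ‖s - a‖ ≤ (1 - t) * ‖s‖) : a = t • s := by
  have hs : ‖s‖ ≤ ‖a‖ + ‖s - a‖ := norm_le_insert' s a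
  have := eq_lineMap_of_dist_eq_mul_of_dist_eq_mul (x := (0 : E)) (y := a) (z := s) (r := t)
    (by rw [dist_zero_left, dist_zero_left]; linarith)
    (by rw [dist_comm, dist_eq_norm, dist_zero_left]; linarith)
  rwa [AffineMap.lineMap_apply_module', sub_zero, add_zero] at this

theorem Complex.exists_norm_eq_one_norm_add_mul (a b : ℂ) :
    ∃ c : ℂ, ‖c‖ = 1 ∧ ‖a + c * b‖ = ‖a‖ + ‖b‖ := by
  refine ⟨exp ((arg a - arg b : ℝ) * I), norm_exp_ofReal_mul_I _, ?_⟩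
  have : a + exp ((arg a - arg b : ℝ) * I) * b = ((‖a‖ + ‖b‖ : ℝ) : ℂ) * exp (arg a * I) := by
    calc _ = ‖a‖ * exp (arg a * I) + exp ((arg a - arg b : ℝ) * I) * (‖b‖ * exp (arg b * I)) := by
          rw [norm_mul_exp_arg_mul_I, norm_mul_exp_arg_mul_I]
      _ = _ := by
          push_cast
          rw [sub_mul, exp_sub]
          field_simp
  rw [this, norm_mul, norm_exp_ofReal_mul_I, Complex.norm_real,
    Real.norm_of_nonneg (by positivity), mul_one]

namespace IsMprojection

variable {X M : Type*} [NormedAddCommGroup X] [Ring M] [Module M X] {P : M}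

theorem one_sub (hP : IsMprojection X P) : IsMprojection X (1 - P) where
  proj := hP.proj.one_sub
  Mnorm x := by rw [sub_sub_cancel, max_comm]; exact hP.Mnorm x

theorem norm_smul_le (hP : IsMprojection X P) (x : X) : ‖P • x‖ ≤ ‖x‖ :=
  (hP.Mnorm x).symm ▸ le_max_left _ _

theorem norm_add_eq_max (hP : IsMprojection X P) {u v : X} (hu : P • u = u) (hv : P • v = 0) :
    ‖u + v‖ = max ‖u‖ ‖v‖ := by
  rw [hP.Mnorm, smul_add, hu, hv, add_zero, sub_smul, one_smul, smul_add, hu, hv, add_zero,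
    add_sub_cancel_left]

end IsMprojection

theorem isMprojection_inl_comp_fst {R E F : Type*} [Ring R] [NormedAddCommGroup E]
    [NormedAddCommGroup F] [Module R E] [Module R F] :
    IsMprojection (E × F) (LinearMap.inl R E F ∘ₗ LinearMap.fst R E F) where
  proj := LinearMap.ext fun _ ↦ rfl
  Mnorm p := by simp [Module.End.smul_def, Prod.norm_def, sub_smul]

theorem IsMprojection.conj {R E F : Type*} [Ring R] [NormedAddCommGroup E]
    [NormedAddCommGroup F] [Module R E] [Module R F] {P : Module.End R E}
    (hP : IsMprojection E P) (Φ : E ≃ₗᵢ[R] F) :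
    IsMprojection F (Φ.toLinearEquiv.conjRingEquiv P) where
  proj := hP.proj.map Φ.toLinearEquiv.conjRingEquiv
  Mnorm y := by
    have h := hP.Mnorm (Φ.symm y)
    simp only [Module.End.smul_def, sub_smul, one_smul] at h ⊢
    rwa [← Φ.norm_map (Φ.symm y), ← Φ.norm_map (P _), ← Φ.norm_map (_ - _), map_sub,
      Φ.apply_symm_apply] at h

namespace ContinuousMap

section

variable {X : Type*} [TopologicalSpace X] [CompactSpace X]

theorem norm_apply_eq_norm_of_forall_le {E : Type*} [NormedAddCommGroup E] {z : C(X, E)} {x : X}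
    (h : ∀ y, ‖z y‖ ≤ ‖z x‖) : ‖z x‖ = ‖z‖ :=
  le_antisymm (z.norm_coe_le_norm x) ((z.norm_le (norm_nonneg _)).2 h)

theorem exists_norm_sub_sub_le_of_apply_eq_zero [T2Space X] {w : C(X, ℂ)} {x : X} (hw : w x = 0)
    {ε : ℝ} (hε : 0 < ε) : ∃ z₁ z₂ : C(X, ℂ),
      ‖z₁ x‖ = ‖z₁‖ ∧ ‖z₂ x‖ = ‖z₂‖ ∧ z₁ x = z₂ x ∧ ‖w - (z₁ - z₂)‖ ≤ ε := by
  have hx : Disjoint {y | ε ≤ ‖w y‖} {x} := by simp [hw, hε]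
  obtain ⟨f, hf0, hf1, hf01⟩ := exists_continuous_zero_one_of_isClosed
    (isClosed_le continuous_const w.continuous.norm) isClosed_singleton hx
  have hfx : f x = 1 := hf1 rfl
  let φ : C(X, ℂ) := ⟨fun y ↦ (f y : ℂ), by fun_prop⟩
  have hφ : ∀ y, ‖φ y‖ = f y := fun y ↦ by simp [φ, (hf01 y).1]
  set M := ‖w‖
  have hM : 0 ≤ M := norm_nonneg w
  refine ⟨w * (1 - φ) + (M : ℂ) • φ, (M : ℂ) • φ, ?_, ?_, by simp [hw], ?_⟩
  · refine norm_apply_eq_norm_of_forall_le fun y ↦ ?_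
    have h1 : ‖1 - φ y‖ = 1 - f y := by
      change ‖1 - ((f y : ℝ) : ℂ)‖ = _
      rw [← Complex.ofReal_one, ← Complex.ofReal_sub, Complex.norm_real,
        Real.norm_of_nonneg (sub_nonneg.2 (hf01 y).2)]
    have hwy : ‖w y‖ ≤ M := w.norm_coe_le_norm y
    calc _ ≤ ‖w y‖ * (1 - f y) + M * f y := by
          simpa [h1, hφ, abs_of_nonneg hM] using norm_add_le (w y * (1 - φ y)) ((M : ℂ) * φ y)
      _ ≤ M * (1 - f y) + M * f y := by gcongr; linarith [(hf01 y).2]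
      _ = _ := by simp [hw, hφ, hfx, abs_of_nonneg hM]; ring
  · refine norm_apply_eq_norm_of_forall_le fun y ↦ ?_
    simp only [coe_smul, Pi.smul_apply, norm_smul, hφ, hfx, Complex.norm_real]
    exact mul_le_mul_of_nonneg_left (hf01 y).2 (norm_nonneg _)
  · have : w - (w * (1 - φ) + (M : ℂ) • φ - (M : ℂ) • φ) = w * φ := by ring
    rw [this]
    refine (norm_le _ hε.le).2 fun y ↦ ?_
    rw [mul_apply, norm_mul, hφ]
    by_cases hy : ε ≤ ‖w y‖
    · simp [hf0 hy, hε.le]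
    · nlinarith [(hf01 y).1, (hf01 y).2]

end

theorem eq_zero_or_eq_one_of_isIdempotentElem {X G₀ : Type*} [TopologicalSpace X]
    [PreconnectedSpace X] [TopologicalSpace G₀] [T1Space G₀] [MonoidWithZero G₀]
    [IsLeftCancelMulZero G₀] [ContinuousMul G₀] {e : C(X, G₀)} (he : IsIdempotentElem e) :
    e = 0 ∨ e = 1 := by
  have hmaps : Set.MapsTo e Set.univ {0, 1} := fun x _ ↦
    IsIdempotentElem.iff_eq_zero_or_one.1 (congr($he x))
  obtain ⟨c, hc, hec⟩ := isPreconnected_univ.eqOn_const_of_mapsTo (Set.toFinite _).isDiscrete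
    e.continuous.continuousOn hmaps ⟨0, by simp⟩
  rcases hc with rfl | rfl
  · exact .inl (ext fun x ↦ hec (Set.mem_univ x))
  · exact .inr (ext fun x ↦ hec (Set.mem_univ x))

variable (𝕜 K L E : Type*) [TopologicalSpace K] [TopologicalSpace L] [CompactSpace K]
  [CompactSpace L] [NormedField 𝕜] [NormedAddCommGroup E] [NormedSpace 𝕜 E]

noncomputable def sumLinearIsometryEquivProd : C(K ⊕ L, E) ≃ₗᵢ[𝕜] C(K, E) × C(L, E) where
  toFun z := (z.comp ⟨Sum.inl, continuous_inl⟩, z.comp ⟨Sum.inr, continuous_inr⟩)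
  invFun p := ⟨Sum.elim p.1 p.2, p.1.continuous.sumElim p.2.continuous⟩
  map_add' _ _ := rfl
  map_smul' _ _ := rfl
  left_inv z := by ext (x | x) <;> rfl
  right_inv _ := rfl
  norm_map' z := by
    refine le_antisymm (max_le ?_ ?_) ((z.norm_le (norm_nonneg _)).2 ?_)
    · exact (norm_le _ (norm_nonneg z)).2 fun _ ↦ z.norm_coe_le_norm _
    · exact (norm_le _ (norm_nonneg z)).2 fun _ ↦ z.norm_coe_le_norm _
    · rintro (k | l)
      · exact ((z.comp ⟨Sum.inl, continuous_inl⟩).norm_coe_le_norm k).trans (le_max_left _ _)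
      · exact ((z.comp ⟨Sum.inr, continuous_inr⟩).norm_coe_le_norm l).trans (le_max_right _ _)

variable {𝕜 K L E}

theorem sumLinearIsometryEquivProd_mul {A : Type*} [NormedRing A] [NormedAlgebra 𝕜 A]
    (z w : C(K ⊕ L, A)) :
    sumLinearIsometryEquivProd 𝕜 K L A (z * w) =
      sumLinearIsometryEquivProd 𝕜 K L A z * sumLinearIsometryEquivProd 𝕜 K L A w :=
  rfl

end ContinuousMap

namespace IsMprojection

variable {X : Type*} [TopologicalSpace X] [CompactSpace X] {P : Module.End ℂ C(X, ℂ)}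

theorem norm_apply_add_norm_apply_le (hP : IsMprojection C(X, ℂ) P) {u v : C(X, ℂ)}
    (hu : P • u = u) (hv : P • v = 0) (x : X) : ‖u x‖ + ‖v x‖ ≤ max ‖u‖ ‖v‖ := by
  obtain ⟨c, hc, hcx⟩ := Complex.exists_norm_eq_one_norm_add_mul (u x) (v x)
  have hcv : P • (c • v) = 0 := by rw [smul_comm, hv, smul_zero]
  calc ‖u x‖ + ‖v x‖ = ‖(u + c • v) x‖ := hcx.symm
    _ ≤ ‖u + c • v‖ := (u + c • v).norm_coe_le_norm x
    _ = max ‖u‖ ‖v‖ := by rw [hP.norm_add_eq_max hu hcv, norm_smul, hc, one_mul]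

theorem norm_apply_le_of_smul_eq (hP : IsMprojection C(X, ℂ) P) {u : C(X, ℂ)} (hu : P • u = u)
    (x : X) : ‖u x‖ ≤ ‖(P • 1 : C(X, ℂ)) x‖ * ‖u‖ := by
  have : Nonempty X := ⟨x⟩
  set v : C(X, ℂ) := (‖u‖ : ℂ) • ((1 - P) • 1)
  have hv : P • v = 0 := by
    rw [smul_comm, smul_smul, hP.proj.mul_one_sub_self, zero_smul, smul_zero]
  have hvnorm : ‖v‖ ≤ ‖u‖ := by
    calc ‖v‖ ≤ ‖u‖ * ‖(1 : C(X, ℂ))‖ := by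
          rw [norm_smul, Complex.norm_real, norm_norm]
          exact mul_le_mul_of_nonneg_left (hP.one_sub.norm_smul_le 1) (norm_nonneg u)
      _ = ‖u‖ := by rw [norm_one, mul_one]
  have hvx : ‖u‖ * (1 - ‖(P • 1 : C(X, ℂ)) x‖) ≤ ‖v x‖ := by
    have : v x = ‖u‖ * (1 - (P • 1 : C(X, ℂ)) x) := by
      simp [v, sub_smul]
    rw [this, norm_mul, Complex.norm_real, norm_norm]
    exact mul_le_mul_of_nonneg_left (by simpa using norm_sub_norm_le (1 : ℂ) _) (norm_nonneg u)
  have := hP.norm_apply_add_norm_apply_le hu hv x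
  rw [max_eq_left hvnorm] at this
  linarith

theorem norm_smul_one_apply_add_le (hP : IsMprojection C(X, ℂ) P) (x : X) :
    ‖(P • 1 : C(X, ℂ)) x‖ + ‖((1 - P) • 1 : C(X, ℂ)) x‖ ≤ 1 := by
  have : Nonempty X := ⟨x⟩
  have hu : P • (P • 1 : C(X, ℂ)) = P • 1 := by rw [smul_smul, hP.proj.eq]
  have hv : P • ((1 - P) • 1 : C(X, ℂ)) = 0 := by
    rw [smul_smul, hP.proj.mul_one_sub_self, zero_smul]
  calc _ ≤ _ := hP.norm_apply_add_norm_apply_le hu hv x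
    _ = 1 := by rw [← hP.Mnorm, norm_one]

theorem apply_eq_norm_smul_of_norm_apply_eq (hP : IsMprojection C(X, ℂ) P) {z : C(X, ℂ)} {x : X}
    (hz : ‖z x‖ = ‖z‖) : (P • z) x = ‖(P • 1 : C(X, ℂ)) x‖ • z x := by
  have hsum := hP.norm_smul_one_apply_add_le x
  apply eq_smul_of_norm_le_mul_of_norm_sub_le_mul
  · calc ‖(P • z) x‖ ≤ ‖(P • 1 : C(X, ℂ)) x‖ * ‖P • z‖ :=
          hP.norm_apply_le_of_smul_eq (by rw [smul_smul, hP.proj.eq]) x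
      _ ≤ ‖(P • 1 : C(X, ℂ)) x‖ * ‖z x‖ :=
          hz ▸ mul_le_mul_of_nonneg_left (hP.norm_smul_le z) (norm_nonneg _)
  · have hQ := hP.one_sub
    calc ‖z x - (P • z) x‖ = ‖((1 - P) • z) x‖ := by rw [sub_smul, one_smul]; rfl
      _ ≤ ‖((1 - P) • 1 : C(X, ℂ)) x‖ * ‖(1 - P) • z‖ :=
          hQ.norm_apply_le_of_smul_eq (by rw [smul_smul, hQ.proj.eq]) x
      _ ≤ (1 - ‖(P • 1 : C(X, ℂ)) x‖) * ‖z x‖ :=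
          hz ▸ mul_le_mul (by linarith) (hQ.norm_smul_le z) (norm_nonneg _)
            (by linarith [norm_nonneg (((1 - P) • 1 : C(X, ℂ)) x)])

theorem smul_one_apply_eq_norm (hP : IsMprojection C(X, ℂ) P) (x : X) :
    (P • 1 : C(X, ℂ)) x = ‖(P • 1 : C(X, ℂ)) x‖ := by
  have : Nonempty X := ⟨x⟩
  simpa using hP.apply_eq_norm_smul_of_norm_apply_eq (z := 1) (x := x) (by simp)

theorem apply_eq_mul_of_norm_apply_eq (hP : IsMprojection C(X, ℂ) P) {z : C(X, ℂ)} {x : X}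
    (hz : ‖z x‖ = ‖z‖) : (P • z) x = (P • 1 : C(X, ℂ)) x * z x := by
  rw [hP.apply_eq_norm_smul_of_norm_apply_eq hz, Complex.real_smul,
    ← hP.smul_one_apply_eq_norm x]

theorem apply_eq_zero_of_apply_eq_zero [T2Space X] (hP : IsMprojection C(X, ℂ) P)
    {w : C(X, ℂ)} {x : X} (hw : w x = 0) : (P • w) x = 0 := by
  refine norm_le_zero_iff.1 (le_of_forall_pos_le_add fun ε hε ↦ ?_)
  obtain ⟨z₁, z₂, h₁, h₂, h₁₂, hwz⟩ := ContinuousMap.exists_norm_sub_sub_le_of_apply_eq_zero hw hε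
  have hPw : (P • w) x = (P • (w - (z₁ - z₂))) x := by
    rw [smul_sub, smul_sub, ContinuousMap.sub_apply, ContinuousMap.sub_apply,
      hP.apply_eq_mul_of_norm_apply_eq h₁, hP.apply_eq_mul_of_norm_apply_eq h₂, h₁₂, sub_self,
      sub_zero]
  calc ‖(P • w) x‖ ≤ ‖P • (w - (z₁ - z₂))‖ := hPw ▸ ContinuousMap.norm_coe_le_norm _ x
    _ ≤ ‖w - (z₁ - z₂)‖ := hP.norm_smul_le _
    _ ≤ 0 + ε := by rwa [zero_add]

theorem smul_eq_smul_one_mul [T2Space X] (hP : IsMprojection C(X, ℂ) P) (z : C(X, ℂ)) :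
    P • z = (P • 1) * z := by
  ext x
  have h0 := hP.apply_eq_zero_of_apply_eq_zero (w := z - z x • 1) (x := x) (by simp)
  have hz : P • z = P • (z - z x • 1) + z x • (P • 1) := by
    rw [smul_sub, smul_comm P (z x), sub_add_cancel]
  rw [hz, ContinuousMap.add_apply, h0, zero_add, ContinuousMap.smul_apply, smul_eq_mul,
    ContinuousMap.mul_apply, mul_comm]

end IsMprojection

theorem IsMprojection.smul_eq_smul_one_mul_of_prod {K L : Type*} [TopologicalSpace K]
    [CompactSpace K] [T2Space K] [TopologicalSpace L] [CompactSpace L] [T2Space L]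
    {R : Module.End ℂ (C(K, ℂ) × C(L, ℂ))} (hR : IsMprojection (C(K, ℂ) × C(L, ℂ)) R)
    (q : C(K, ℂ) × C(L, ℂ)) : R • q = (R • 1) * q := by
  set Φ := ContinuousMap.sumLinearIsometryEquivProd ℂ K L ℂ
  have h := congrArg Φ ((hR.conj Φ.symm).smul_eq_smul_one_mul (Φ.symm q))
  rwa [ContinuousMap.sumLinearIsometryEquivProd_mul] at h

theorem IsMprojection.eq_zero_or_one_or_inl_comp_fst_or_inr_comp_snd {K L : Type*}
    [TopologicalSpace K] [CompactSpace K] [T2Space K] [PreconnectedSpace K]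
    [TopologicalSpace L] [CompactSpace L] [T2Space L] [PreconnectedSpace L]
    {R : Module.End ℂ (C(K, ℂ) × C(L, ℂ))} (hR : IsMprojection (C(K, ℂ) × C(L, ℂ)) R) :
    R = 0 ∨ R = 1 ∨ R = LinearMap.inl ℂ _ _ ∘ₗ LinearMap.fst ℂ _ _ ∨
      R = LinearMap.inr ℂ _ _ ∘ₗ LinearMap.snd ℂ _ _ := by
  obtain ⟨e, hRe, hidem⟩ : ∃ e, (∀ q, R q = e * q) ∧ IsIdempotentElem e :=
    ⟨R • 1, hR.smul_eq_smul_one_mul_of_prod, by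
      rw [IsIdempotentElem, ← hR.smul_eq_smul_one_mul_of_prod, smul_smul, hR.proj.eq]⟩
  obtain ⟨e₁, e₂⟩ := e
  have h₁ : IsIdempotentElem e₁ := hidem.map (MonoidHom.fst _ _)
  have h₂ : IsIdempotentElem e₂ := hidem.map (MonoidHom.snd _ _)
  rcases ContinuousMap.eq_zero_or_eq_one_of_isIdempotentElem h₁ with rfl | rfl <;>
    rcases ContinuousMap.eq_zero_or_eq_one_of_isIdempotentElem h₂ with rfl | rfl
  · exact .inl (LinearMap.ext fun q ↦ by simp [hRe, Prod.mk_zero_zero])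
  · exact .inr (.inr (.inr (LinearMap.ext fun q ↦ by ext <;> simp [hRe])))
  · exact .inr (.inr (.inl (LinearMap.ext fun q ↦ by ext <;> simp [hRe])))
  · exact .inr (.inl (LinearMap.ext fun q ↦ by simp [hRe, Prod.mk_one_one]))

theorem LinearEquiv.image_setOf_apply_eq_self {R M N : Type*} [Semiring R] [AddCommMonoid M]
    [AddCommMonoid N] [Module R M] [Module R N] (e : M ≃ₗ[R] N) (f : Module.End R M) :
    e '' {p | f p = p} = {q | e.conjRingEquiv f q = q} := by
  ext q
  rw [e.image_eq_preimage_symm]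
  exact e.eq_symm_apply

/-- A surjective linear isometry of `C(K,ℂ) ⊕ C(L,ℂ)` (sup norm), with `K`, `L`
nonempty compact Hausdorff connected spaces, either preserves the summand
`C(K,ℂ) ⊕ {0}` or maps it onto `{0} ⊕ C(L,ℂ)`. -/
theorem isometry_of_sum_CK_CL_preserves_or_swaps
    {K L : Type*} [TopologicalSpace K] [CompactSpace K] [T2Space K] [ConnectedSpace K]
    [TopologicalSpace L] [CompactSpace L] [T2Space L] [ConnectedSpace L]
    (α : (C(K, ℂ) × C(L, ℂ)) →ₗᵢ[ℂ] (C(K, ℂ) × C(L, ℂ)))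
    (hα : Function.Surjective α) :
    ⇑α '' {p : C(K, ℂ) × C(L, ℂ) | p.2 = 0} = {p : C(K, ℂ) × C(L, ℂ) | p.2 = 0} ∨
    ⇑α '' {p : C(K, ℂ) × C(L, ℂ) | p.2 = 0} = {p : C(K, ℂ) × C(L, ℂ) | p.1 = 0} := by
  set β := LinearIsometryEquiv.ofSurjective α hα
  set π : Module.End ℂ (C(K, ℂ) × C(L, ℂ)) := LinearMap.inl ℂ _ _ ∘ₗ LinearMap.fst ℂ _ _
  have hR : IsMprojection _ (β.toLinearEquiv.conjRingEquiv π) :=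
    isMprojection_inl_comp_fst.conj β
  have himage : ⇑α '' {p | p.2 = 0} = {q | β.toLinearEquiv.conjRingEquiv π q = q} := by
    rw [← β.toLinearEquiv.image_setOf_apply_eq_self]
    congr 1 with p
    simp [π, Prod.ext_iff, eq_comm]
  rcases hR.eq_zero_or_one_or_inl_comp_fst_or_inr_comp_snd with h | h | h | h <;>
    rw [h] at himage
  · have h10 : α (1, 0) ∈ {q | (0 : Module.End ℂ _) q = q} :=
      himage ▸ Set.mem_image_of_mem α rfl
    simp [map_eq_zero_iff α α.injective] at h10
  · have h01 : α (0, 1) ∈ α '' {p | p.2 = 0} := by simp [himage]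
    simp at h01
  · exact .inl (himage.trans (by ext q; simp [Prod.ext_iff, eq_comm]))
  · exact .inr (himage.trans (by ext q; simp [Prod.ext_iff, eq_comm]))
end

section
/- Let L and K be compact metric spaces and ζ : L → K a continuous surjection. Equip the spaces of nonempty closed (equivalently, compact) subsets of K and of L with the Hausdorff metric. Then the map A ↦ ζ^{-1}(A), from nonempty closed subsets of K to nonempty closed subsets of L, is Borel measurable. -/
open TopologicalSpace

/-!
The topology of the Hausdorff metric on nonempty compacts is the Vietoris topology, so for a second
countable base space its Borel σ-algebra is generated by the hit sets `{A | A ∩ U ≠ ∅}`, `U` open: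
a miss set `{A | A ⊆ U}` is the complement of the hit set of the closed set `Uᶜ`, and a compact set
meets a closed set `F` iff it meets every thickening of `F`. Under `A ↦ ζ⁻¹(A)` the hit set of `U`
pulls back to the hit set of `ζ(U)`, which is σ-compact, so that hit set is a countable union of
closed sets.
-/

open Metric Set MeasureTheory

theorem IsOpen.isSigmaCompact {X : Type*} [PseudoEMetricSpace X] [SigmaCompactSpace X]
    {U : Set X} (hU : IsOpen U) : IsSigmaCompact U := by
  obtain ⟨F, hF, -, rfl, -⟩ := hU.exists_iUnion_isClosed
  exact isSigmaCompact_iUnion _ fun n =>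
    isSigmaCompact_univ.of_isClosed_subset (hF n) (subset_univ _)

namespace TopologicalSpace.NonemptyCompacts

theorem measurableSet_setOf_inter_nonempty {X : Type*} [TopologicalSpace X] [T2Space X]
    [MeasurableSpace (NonemptyCompacts X)] [OpensMeasurableSpace (NonemptyCompacts X)]
    {s : Set X} (hs : IsSigmaCompact s) :
    MeasurableSet {K : NonemptyCompacts X | ((K : Set X) ∩ s).Nonempty} := by
  obtain ⟨C, hC, rfl⟩ := hs
  simp only [inter_iUnion, nonempty_iUnion, ofPred_exists]
  exact .iUnion fun n => (isClosed_inter_nonempty_of_isClosed (hC n).isClosed).measurableSet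

theorem setOf_inter_nonempty_eq_iInter_thickening {X : Type*} [PseudoEMetricSpace X]
    {F : Set X} (hF : IsClosed F) :
    {K : NonemptyCompacts X | ((K : Set X) ∩ F).Nonempty} =
      ⋂ n : ℕ,
        {K : NonemptyCompacts X | ((K : Set X) ∩ thickening (1 / (n + 1 : ℝ)) F).Nonempty} := by
  ext K
  simp only [mem_iInter, mem_ofPred_eq]
  refine ⟨fun h n => h.mono (inter_subset_inter_right _ (self_subset_thickening (by positivity) F)),
    fun h => ?_⟩
  by_contra hKF
  rw [not_nonempty_iff_eq_empty, ← disjoint_iff_inter_eq_empty] at hKF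
  obtain ⟨δ, hδ, hdisj⟩ := hKF.exists_thickenings K.isCompact hF
  obtain ⟨n, hn⟩ := exists_nat_one_div_lt hδ
  obtain ⟨x, hxK, hxF⟩ := h n
  exact hdisj.ne_of_mem (self_subset_thickening hδ _ hxK) (thickening_mono hn.le F hxF) rfl

variable {X Y : Type*} [PseudoEMetricSpace X] [MeasurableSpace Y] {g : Y → NonemptyCompacts X}

theorem measurableSet_preimage_setOf_inter_nonempty_of_isClosed
    (hg : ∀ U, IsOpen U → MeasurableSet (g ⁻¹' {K | ((K : Set X) ∩ U).Nonempty}))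
    {F : Set X} (hF : IsClosed F) :
    MeasurableSet (g ⁻¹' {K | ((K : Set X) ∩ F).Nonempty}) := by
  rw [setOf_inter_nonempty_eq_iInter_thickening hF, preimage_iInter]
  exact .iInter fun n => hg _ isOpen_thickening

theorem measurable_of_measurableSet_preimage_setOf_inter_nonempty [SecondCountableTopology X]
    [MeasurableSpace (NonemptyCompacts X)] [BorelSpace (NonemptyCompacts X)]
    (hg : ∀ U, IsOpen U → MeasurableSet (g ⁻¹' {K | ((K : Set X) ∩ U).Nonempty})) :
    Measurable g := by
  obtain ⟨B, -, -, hB⟩ := exists_countable_basis X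
  rw [‹BorelSpace (NonemptyCompacts X)›.measurable_eq, hB.nonemptyCompacts.borel_eq_generateFrom]
  refine measurable_generateFrom ?_
  rintro _ ⟨u, ⟨hu, -, huB⟩, rfl⟩
  have hsub : {K : NonemptyCompacts X | (K : Set X) ⊆ ⋃₀ u} =
      {K : NonemptyCompacts X | ((K : Set X) ∩ (⋃₀ u)ᶜ).Nonempty}ᶜ := by
    ext K; simp [inter_compl_nonempty_iff]
  simp only [ofPred_and, ofPred_forall, preimage_inter, preimage_iInter, hsub, preimage_compl]
  refine .inter (measurableSet_preimage_setOf_inter_nonempty_of_isClosed hg ?_).compl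
    (.biInter hu.countable fun U hU => hg U (hB.isOpen (huB hU)))
  exact (isOpen_sUnion fun U hU => hB.isOpen (huB hU)).isClosed_compl

end TopologicalSpace.NonemptyCompacts

open NonemptyCompacts in
theorem measurable_preimage_map_nonemptyCompacts_general
    {L K : Type*} [MetricSpace L] [MetricSpace K] [CompactSpace L]
    (ζ : L → K) (hζc : Continuous ζ)
    (f : NonemptyCompacts K → NonemptyCompacts L)
    (hf : ∀ A : NonemptyCompacts K, (f A : Set L) = ζ ⁻¹' (A : Set K)) :
    @Measurable _ _ (borel (NonemptyCompacts K)) (borel (NonemptyCompacts L)) f := by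
  borelize (NonemptyCompacts K) (NonemptyCompacts L)
  refine measurable_of_measurableSet_preimage_setOf_inter_nonempty fun U hU => ?_
  have hpre : f ⁻¹' {B | ((B : Set L) ∩ U).Nonempty} =
      {A : NonemptyCompacts K | ((A : Set K) ∩ ζ '' U).Nonempty} := by
    ext A
    rw [mem_preimage, mem_ofPred_eq, mem_ofPred_eq, hf, inter_comm, ← image_inter_nonempty_iff,
      inter_comm]
  rw [hpre]
  exact measurableSet_setOf_inter_nonempty (hU.isSigmaCompact.image hζc)

/-- For a continuous surjection `ζ : L → K` between compact metric spaces, the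
preimage map `A ↦ ζ⁻¹(A)` between the hyperspaces of nonempty compact subsets
(with the Hausdorff metric, hence their Borel σ-algebras) is Borel measurable. -/
theorem measurable_preimage_map_nonemptyCompacts
    {L K : Type*} [MetricSpace L] [MetricSpace K] [CompactSpace L] [CompactSpace K]
    (ζ : L → K) (hζc : Continuous ζ) (hζs : Function.Surjective ζ)
    (f : NonemptyCompacts K → NonemptyCompacts L)
    (hf : ∀ A : NonemptyCompacts K, (f A : Set L) = ζ ⁻¹' (A : Set K)) :
    @Measurable _ _ (borel (NonemptyCompacts K)) (borel (NonemptyCompacts L)) f :=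
  measurable_preimage_map_nonemptyCompacts_general ζ hζc f hf
end
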